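/- Let ρ be a probability measure on ℝ × ℝ that is absolutely continuous with respect to two-dimensional Lebesgue measure, with marginal densities f₁ (first coordinate) and f₂ (second coordinate). Define π₁(x) = condCDF(ρ) x x and π₂(x) = condCDF(ρ') x x where ρ' is the pushforward of ρ under the coordinate swap. Then the pushforward of ρ under the map (u, v) ↦ min{u, v} is absolutely continuous with density x ↦ f₁(x)·(1 − π₁(x)) + f₂(x)·(1 − π₂(x)) with respect to Lebesgue measure on ℝ; equivalently, the density of the minimum equals f₁ + f₂ minus the density of the maximum. -/

import Mathlib

open MeasureTheory ProbabilityTheory Set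

/-! Off the diagonal, which is `ρ`-null because `ρ ≪ volume`, `min X Y ∈ s` means that either
`X ∈ s` and `X < Y`, or the same holds with `X` and `Y` exchanged. Disintegrating `ρ` along its
first marginal, `P(X ∈ s, X < Y) = ∫_s f₁(x) P(Y > x | X = x) dx = ∫_s f₁ (1 - π₁)`; applied to
the swapped measure, the same computation gives the `f₂` term. -/

lemma ae_fst_ne_snd_prod {α : Type*} [MeasurableSpace α] [MeasurableEq α]
    (μ ν : Measure α) [SFinite ν] [NullSingletonClass ν] :
    ∀ᵐ p ∂μ.prod ν, p.1 ≠ p.2 := by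
  refine (Measure.ae_prod_iff_ae_ae (p := fun p : α × α => p.1 ≠ p.2)
    measurableSet_diagonal.compl).mpr ?_
  exact .of_forall fun x => (ν.ae_ne x).mono fun _ hy => Ne.symm hy

lemma measurable_condCDF_comp {α : Type*} [MeasurableSpace α] (ρ : Measure (α × ℝ))
    [IsFiniteMeasure ρ] {g : α → ℝ} (hg : Measurable g) :
    Measurable fun a => condCDF ρ a (g a) := by
  have h : Measurable fun a => (isCondKernelCDF_condCDF ρ).toKernel _ ((), a) (Iic (g a)) :=
    Kernel.measurable_kernel_prodMk_left'
      (measurableSet_le measurable_snd (hg.comp measurable_fst)) ()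
  simp only [IsCondKernelCDF.toKernel_Iic] at h
  simpa [ENNReal.toReal_ofReal (condCDF_nonneg ρ _ _)] using h.ennreal_toReal

lemma measure_mem_lt_snd_eq_setLIntegral_condCDF {α : Type*} [MeasurableSpace α]
    (μ : Measure (α × ℝ)) [IsFiniteMeasure μ] {g : α → ℝ} (hg : Measurable g)
    {s : Set α} (hs : MeasurableSet s) :
    μ {p | p.1 ∈ s ∧ g p.1 < p.2}
      = ∫⁻ x in s, ENNReal.ofReal (1 - condCDF μ x (g x)) ∂μ.fst := by
  have hκ := isCondKernelCDF_condCDF μ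
  have hS : MeasurableSet {p : α × ℝ | p.1 ∈ s ∧ g p.1 < p.2} :=
    (measurable_fst hs).inter (measurableSet_lt (hg.comp measurable_fst) measurable_snd)
  have hdisintegration := lintegral_toKernel_mem hκ () hS
  rw [Kernel.const_apply, Kernel.const_apply] at hdisintegration
  rw [← hdisintegration, ← lintegral_indicator hs]
  refine lintegral_congr fun x => ?_
  by_cases hx : x ∈ s
  · have hsection : Prod.mk x ⁻¹' {p : α × ℝ | p.1 ∈ s ∧ g p.1 < p.2} = (Iic (g x))ᶜ := by
      ext y; simp [hx]
    rw [indicator_of_mem hx, hsection, prob_compl_eq_one_sub measurableSet_Iic,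
      IsCondKernelCDF.toKernel_Iic, ENNReal.ofReal_sub _ (condCDF_nonneg μ _ _),
      ENNReal.ofReal_one]
  · have hsection : Prod.mk x ⁻¹' {p : α × ℝ | p.1 ∈ s ∧ g p.1 < p.2} = ∅ := by
      ext y; simp [hx]
    rw [indicator_of_notMem hx, hsection, measure_empty]

lemma measure_mem_lt_snd_eq_setLIntegral_density {α : Type*} [MeasurableSpace α]
    (μ : Measure (α × ℝ)) [IsFiniteMeasure μ] (ν : Measure α) {f g : α → ℝ}
    (hf : Measurable f) (hf_nonneg : ∀ x, 0 ≤ f x) (hg : Measurable g)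
    (hμ : μ.fst = ν.withDensity fun x => ENNReal.ofReal (f x))
    {s : Set α} (hs : MeasurableSet s) :
    μ {p | p.1 ∈ s ∧ g p.1 < p.2}
      = ∫⁻ x in s, ENNReal.ofReal (f x * (1 - condCDF μ x (g x))) ∂ν := by
  have hmeas : Measurable fun x => ENNReal.ofReal (1 - condCDF μ x (g x)) :=
    (measurable_const.sub (measurable_condCDF_comp μ hg)).ennreal_ofReal
  rw [measure_mem_lt_snd_eq_setLIntegral_condCDF μ hg hs, hμ,
    setLIntegral_withDensity_eq_setLIntegral_mul _ hf.ennreal_ofReal hmeas hs]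
  refine setLIntegral_congr_fun hs fun x _ => ?_
  rw [Pi.mul_apply, ENNReal.ofReal_mul (hf_nonneg x)]

lemma map_min_apply {μ : Measure (ℝ × ℝ)} (hμ : ∀ᵐ p ∂μ, p.1 ≠ p.2) {s : Set ℝ}
    (hs : MeasurableSet s) :
    μ.map (fun p => min p.1 p.2) s
      = μ {p | p.1 ∈ s ∧ p.1 < p.2} + μ.map Prod.swap {p | p.1 ∈ s ∧ p.1 < p.2} := by
  have hA : MeasurableSet {p : ℝ × ℝ | p.1 ∈ s ∧ p.1 < p.2} :=
    (measurable_fst hs).inter (measurableSet_lt measurable_fst measurable_snd)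
  have hdisj : Disjoint {p : ℝ × ℝ | p.1 ∈ s ∧ p.1 < p.2}
      (Prod.swap ⁻¹' {p | p.1 ∈ s ∧ p.1 < p.2}) :=
    disjoint_left.mpr fun p h₁ h₂ => h₁.2.not_gt h₂.2
  rw [Measure.map_apply (measurable_fst.min measurable_snd) hs,
    Measure.map_apply measurable_swap hA, ← measure_union hdisj (measurable_swap hA)]
  refine measure_congr (Filter.eventuallyEq_set.mpr ?_)
  filter_upwards [hμ] with p hp
  rcases hp.lt_or_gt with h | h
  · simp [h, h.not_gt, min_eq_left h.le]
  · simp [h, h.not_gt, min_eq_right h.le]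

/-- The pushforward of an absolutely continuous probability measure `ρ` on `ℝ × ℝ` under
`(u, v) ↦ min u v` has Lebesgue density `x ↦ f₁(x)(1 − π₁(x)) + f₂(x)(1 − π₂(x))`, where
`f₁, f₂` are the marginal densities and `π₁(x) = condCDF ρ x x`,
`π₂(x) = condCDF ρ' x x` with `ρ'` the swap pushforward of `ρ`; equivalently, the density of
the minimum equals `f₁ + f₂` minus the density of the maximum. -/
theorem min_pushforward_density
    (ρ : Measure (ℝ × ℝ)) [IsProbabilityMeasure ρ]
    (hac : ρ ≪ (volume : Measure (ℝ × ℝ)))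
    (f₁ f₂ : ℝ → ℝ)
    (hf₁meas : Measurable f₁) (hf₂meas : Measurable f₂)
    (hf₁nonneg : ∀ x, 0 ≤ f₁ x) (hf₂nonneg : ∀ x, 0 ≤ f₂ x)
    (hf₁ : ρ.map Prod.fst = volume.withDensity fun x => ENNReal.ofReal (f₁ x))
    (hf₂ : ρ.map Prod.snd = volume.withDensity fun x => ENNReal.ofReal (f₂ x)) :
    (ρ.map (fun p : ℝ × ℝ => min p.1 p.2)
        = volume.withDensity (fun x => ENNReal.ofReal
            (f₁ x * (1 - condCDF ρ x x) + f₂ x * (1 - condCDF (ρ.map Prod.swap) x x))))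
    ∧ ∀ x, f₁ x * (1 - condCDF ρ x x) + f₂ x * (1 - condCDF (ρ.map Prod.swap) x x)
        = f₁ x + f₂ x
          - (f₁ x * condCDF ρ x x + f₂ x * condCDF (ρ.map Prod.swap) x x) := by
  refine ⟨?_, fun x => by ring⟩
  have hdiag : ∀ᵐ p ∂ρ, p.1 ≠ p.2 :=
    hac.ae_le (by rw [Measure.volume_eq_prod]; exact ae_fst_ne_snd_prod _ _)
  have hf₂' : (ρ.map Prod.swap).fst = volume.withDensity fun x => ENNReal.ofReal (f₂ x) := by
    rw [Measure.fst_map_swap]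
    exact hf₂
  have hmeas₁ : Measurable fun x => ENNReal.ofReal (f₁ x * (1 - condCDF ρ x x)) :=
    (hf₁meas.mul
      (measurable_const.sub (measurable_condCDF_comp ρ measurable_id'))).ennreal_ofReal
  ext s hs
  rw [map_min_apply hdiag hs, withDensity_apply _ hs,
    measure_mem_lt_snd_eq_setLIntegral_density ρ _ hf₁meas hf₁nonneg measurable_id' hf₁ hs,
    measure_mem_lt_snd_eq_setLIntegral_density _ _ hf₂meas hf₂nonneg measurable_id' hf₂' hs,
    ← lintegral_add_left hmeas₁]
  refine setLIntegral_congr_fun hs fun x _ => ?_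
  rw [← ENNReal.ofReal_add (mul_nonneg (hf₁nonneg x) (sub_nonneg.mpr (condCDF_le_one ρ x x)))
    (mul_nonneg (hf₂nonneg x) (sub_nonneg.mpr (condCDF_le_one _ x x)))]
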